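/- Let γ ∈ ℝ, τ > 0 with τ|γ| ≤ 1, and let (a_n)_{n=0}^N be nonnegative reals satisfying a_n² − a_{n-1}² ≤ 2τγ((a_n + a_{n-1})/2)² for 1 ≤ n ≤ N. Then a_n ≤ e^{2 max(γ,0) nτ} a_0 for all 0 ≤ n ≤ N. -/
import Mathlib

lemma ratio_le_exp {x : ℝ} (hx0 : 0 ≤ x) (hx : x ≤ 1/2) :
    (1 + x) / (1 - x) ≤ Real.exp (4 * x) := by
  have h1 : (0:ℝ) < 1 - x := by linarith
  have hinv : 1 / (1 - x) ≤ 1 + 2 * x := by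
    rw [div_le_iff₀ h1]
    nlinarith
  have h2 : 1 + x ≤ Real.exp x := by
    have := Real.add_one_le_exp x; linarith
  have h3 : 1 + 2 * x ≤ Real.exp (2 * x) := by
    have := Real.add_one_le_exp (2 * x); linarith
  have hy : (1 + x) / (1 - x) = (1 + x) * (1 / (1 - x)) := by ring
  rw [hy]
  calc (1 + x) * (1 / (1 - x)) ≤ Real.exp x * Real.exp (2 * x) := by
        apply mul_le_mul h2 (hinv.trans h3) (by positivity) (Real.exp_pos _).le
    _ = Real.exp (3 * x) := by rw [← Real.exp_add]; ring_nf
    _ ≤ Real.exp (4 * x) := by apply Real.exp_le_exp.2; linarith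

theorem l2_stability
    (N : ℕ) (γ τ : ℝ) (hτ : 0 < τ) (hτγ : τ * |γ| ≤ 1)
    (a : ℕ → ℝ) (ha : ∀ n, 0 ≤ a n)
    (h : ∀ n, 1 ≤ n → n ≤ N →
      (a n)^2 - (a (n - 1))^2 ≤ 2 * τ * γ * ((a n + a (n - 1)) / 2)^2) :
    ∀ n, n ≤ N → a n ≤ Real.exp (2 * max γ 0 * n * τ) * a 0 := by
  set g := max γ 0 with hg
  have step : ∀ n, 1 ≤ n → n ≤ N → a n ≤ Real.exp (2 * g * τ) * a (n - 1) := by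
    intro n h1 h2
    have key := h n h1 h2
    set b := a (n - 1) with hb
    set s := a n + b with hs
    have hs0 : 0 ≤ s := add_nonneg (ha n) (ha _)
    rcases eq_or_lt_of_le hs0 with hseq | hspos
    · have han : a n = 0 := by
        have := ha n; have := ha (n-1); simp only [hs] at hseq; linarith
      rw [han]
      exact mul_nonneg (Real.exp_pos _).le (ha _)
    · -- divide by s
      have key2 : a n - b ≤ τ * γ / 2 * s := by
        have hfac : (a n)^2 - b^2 = (a n - b) * s := by rw [hs]; ring
        have hsq : 2 * τ * γ * (s / 2)^2 = (τ * γ / 2 * s) * s := by ring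
        rw [hfac] at key
        rw [hsq] at key
        exact le_of_mul_le_mul_right key hspos
      rcases le_or_gt γ 0 with hγ | hγ
      · have hgz : g = 0 := max_eq_right hγ
        have : τ * γ / 2 * s ≤ 0 := by
          apply mul_nonpos_of_nonpos_of_nonneg _ hspos.le
          have : τ * γ ≤ 0 := mul_nonpos_of_nonneg_of_nonpos hτ.le hγ
          linarith
        rw [hgz]
        simp only [mul_zero, zero_mul, Real.exp_zero, one_mul]
        linarith
      · have hgγ : g = γ := max_eq_left hγ.le
        set x := τ * γ / 2 with hx
        have hx0 : 0 < x := by positivity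
        have habs : |γ| = γ := abs_of_pos hγ
        have hxhalf : x ≤ 1/2 := by rw [hx]; rw [habs] at hτγ; linarith
        have h1x : (0:ℝ) < 1 - x := by linarith
        -- a n - b ≤ x * s = x * (a n + b)
        have h5 : a n * (1 - x) ≤ b * (1 + x) := by
          have : a n - b ≤ x * (a n + b) := by rw [hs] at key2; linarith
          nlinarith
        have h6 : a n ≤ b * ((1 + x) / (1 - x)) := by
          rw [mul_div_assoc', le_div_iff₀ h1x]
          linarith
        have h7 : (1 + x) / (1 - x) ≤ Real.exp (4 * x) := ratio_le_exp hx0.le hxhalf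
        have h8 : (4 : ℝ) * x = 2 * g * τ := by rw [hgγ, hx]; ring
        calc a n ≤ b * ((1 + x) / (1 - x)) := h6
          _ ≤ b * Real.exp (4 * x) := by
              apply mul_le_mul_of_nonneg_left h7 (ha _)
          _ = Real.exp (2 * g * τ) * b := by rw [h8]; ring
  intro n
  induction n with
  | zero => intro _; simp
  | succ n ih =>
    intro hn
    have hn' : n ≤ N := Nat.le_of_succ_le hn
    have ihn := ih hn'
    have hstep := step (n+1) (Nat.le_add_left 1 n) hn
    simp only [Nat.add_sub_cancel] at hstep
    calc a (n+1) ≤ Real.exp (2 * g * τ) * a n := hstep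
      _ ≤ Real.exp (2 * g * τ) * (Real.exp (2 * g * n * τ) * a 0) := by
          apply mul_le_mul_of_nonneg_left ihn (Real.exp_pos _).le
      _ = Real.exp (2 * g * ((n+1 : ℕ) : ℝ) * τ) * a 0 := by
          rw [← mul_assoc, ← Real.exp_add]
          push_cast
          ring_nf
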